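/- Global exponential vanishing of the path-following error for the singularity-free construction: suppose in addition that each |f_i′| is globally bounded on ℝ, i.e., there is M < ∞ with |f_i′(w)| ≤ M for all w ∈ ℝ and i = 1, …, n. Then Λ′ := inf_{ξ ∈ ℝ^{n+1}} λ_min(Kᵀ N(ξ)ᵀ N(ξ) K) > 0, where N(ξ) is the (n+1)×n matrix with columns ∇φ₁(ξ), …, ∇φ_n(ξ), K = diag(k₁, …, k_n), and λ_min denotes the smallest eigenvalue; and there exist constants c ≥ 1 and λ > 0 (one may take c = √(k_max/k_min) and λ = Λ′/k_max, where k_max and k_min are the largest and smallest gains) such that every solution ξ : [0, ∞) → ℝ^{n+1} of ξ′(t) = χʰ(ξ(t)) satisfies ‖e(ξ(t))‖ ≤ c ‖e(ξ(0))‖ e^{−λ t} for all t ≥ 0. -/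

import Mathlib

open scoped RealInnerProductSpace

/-- The higher-dimensional guiding vector field `χʰ` on `ℝ^{n+1}` (coordinates
`ξ = (x₁, …, xₙ, w)`) associated with the parameterized path `xᵢ = fᵢ(w)` and gains
`kᵢ`. -/
noncomputable def chih {n : ℕ} (f : Fin n → ℝ → ℝ) (kg : Fin n → ℝ)
    (ξ : EuclideanSpace ℝ (Fin (n + 1))) : EuclideanSpace ℝ (Fin (n + 1)) :=
  WithLp.toLp 2 (Fin.snoc (α := fun _ => ℝ)
    (fun i => (-1 : ℝ) ^ n * deriv (f i) (ξ (Fin.last n)) -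
      kg i * (ξ (Fin.castSucc i) - f i (ξ (Fin.last n))))
    ((-1 : ℝ) ^ n + ∑ i, kg i * (ξ (Fin.castSucc i) - f i (ξ (Fin.last n))) *
      deriv (f i) (ξ (Fin.last n))))

/-- The gradient `∇φᵢ(ξ) = eᵢ − fᵢ'(w) e_{n+1}` of `φᵢ(ξ) = xᵢ − fᵢ(w)`. -/
noncomputable def gradphi {n : ℕ} (f : Fin n → ℝ → ℝ) (i : Fin n)
    (ξ : EuclideanSpace ℝ (Fin (n + 1))) : EuclideanSpace ℝ (Fin (n + 1)) :=
  EuclideanSpace.single (Fin.castSucc i) (1 : ℝ) -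
    deriv (f i) (ξ (Fin.last n)) • EuclideanSpace.single (Fin.last n) (1 : ℝ)

lemma inner_gradphi {n : ℕ} (f : Fin n → ℝ → ℝ) (i j : Fin n)
    (ξ : EuclideanSpace ℝ (Fin (n + 1))) :
    ⟪gradphi f i ξ, gradphi f j ξ⟫ = (if i = j then (1:ℝ) else 0) +
      deriv (f i) (ξ (Fin.last n)) * deriv (f j) (ξ (Fin.last n)) := by
  have h1 : ∀ m : Fin n, Fin.castSucc m ≠ Fin.last n := fun m => (Fin.castSucc_lt_last m).ne
  have h2 : ∀ m : Fin n, Fin.last n ≠ Fin.castSucc m := fun m => (Fin.castSucc_lt_last m).ne'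
  simp only [gradphi, inner_sub_left, inner_sub_right, real_inner_smul_left,
    real_inner_smul_right, EuclideanSpace.inner_single_left, map_one,
    EuclideanSpace.single_apply, starRingEnd_apply, star_trivial, PiLp.smul_apply,
    smul_eq_mul, if_neg (h1 i), if_neg (h1 j), if_neg (h2 i), if_neg (h2 j), if_pos rfl,
    Fin.castSucc_inj]
  simp only [if_true]
  split <;> ring

lemma quad_form_eq {n : ℕ} (kg g v : Fin n → ℝ) :
    ∑ i, ∑ j, v i * (kg i * ((if i = j then (1:ℝ) else 0) + g i * g j) * kg j) * v j =
      ∑ i, (kg i * v i) ^ 2 + (∑ i, kg i * g i * v i) ^ 2 := by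
  have key : ∀ i j : Fin n,
      v i * (kg i * ((if i = j then (1:ℝ) else 0) + g i * g j) * kg j) * v j =
      (if i = j then (kg j * v j) ^ 2 else 0) + (kg i * g i * v i) * (kg j * g j * v j) := by
    intro i j
    by_cases h : i = j
    · subst h; rw [if_pos rfl, if_pos rfl]; ring
    · simp only [if_neg h]; ring
  calc ∑ i, ∑ j, v i * (kg i * ((if i = j then (1:ℝ) else 0) + g i * g j) * kg j) * v j
      = ∑ i, ((kg i * v i) ^ 2 + (kg i * g i * v i) * ∑ j, kg j * g j * v j) := by
        refine Finset.sum_congr rfl fun i _ => ?_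
        rw [Finset.sum_congr rfl fun j _ => key i j, Finset.sum_add_distrib,
          ← Finset.mul_sum]
        congr 1
        exact (Finset.sum_ite_eq Finset.univ i (fun j => (kg j * v j)^2)).trans (by simp)
    _ = ∑ i, (kg i * v i) ^ 2 + (∑ i, kg i * g i * v i) ^ 2 := by
        rw [Finset.sum_add_distrib, ← Finset.sum_mul, sq]

/-- Global exponential vanishing of the path-following error for the
singularity-free construction: if each `|fᵢ'|` is globally bounded, then
`Λ' = inf_ξ λ_min(Kᵀ N(ξ)ᵀ N(ξ) K) > 0` (expressed as a uniform Rayleigh-quotient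
lower bound), and there exist `c ≥ 1` and `λ > 0` such that every global solution of
`ξ' = χʰ(ξ)` satisfies `‖e(ξ(t))‖ ≤ c ‖e(ξ(0))‖ e^{−λ t}` for `t ≥ 0`. -/
theorem global_exponential_error_decay {n : ℕ} (hn : 1 ≤ n)
    (f : Fin n → ℝ → ℝ) (hf : ∀ i, ContDiff ℝ 2 (f i))
    (kg : Fin n → ℝ) (hk : ∀ i, 0 < kg i)
    (M : ℝ) (hM : ∀ i (w : ℝ), |deriv (f i) w| ≤ M) :
    ∃ Λ > (0 : ℝ),
      (∀ (ξ : EuclideanSpace ℝ (Fin (n + 1))) (v : Fin n → ℝ),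
        Λ * ∑ i, (v i) ^ 2 ≤
          ∑ i, ∑ j, v i * (kg i * ⟪gradphi f i ξ, gradphi f j ξ⟫ * kg j) * v j) ∧
      ∃ c ≥ (1 : ℝ), ∃ lam > (0 : ℝ),
        ∀ ξtraj : ℝ → EuclideanSpace ℝ (Fin (n + 1)),
          (∀ t : ℝ, 0 ≤ t →
            HasDerivWithinAt ξtraj (chih f kg (ξtraj t)) (Set.Ici (0 : ℝ)) t) →
          ∀ t : ℝ, 0 ≤ t →
            Real.sqrt (∑ i,
                (ξtraj t (Fin.castSucc i) - f i (ξtraj t (Fin.last n))) ^ 2) ≤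
              c * Real.sqrt (∑ i,
                (ξtraj 0 (Fin.castSucc i) - f i (ξtraj 0 (Fin.last n))) ^ 2) *
                Real.exp (-lam * t) := by
  haveI : NeZero n := ⟨by omega⟩
  have hne : (Finset.univ : Finset (Fin n)).Nonempty := Finset.univ_nonempty
  set kmin : ℝ := Finset.univ.inf' hne kg with hkmin_def
  set kmax : ℝ := Finset.univ.sup' hne kg with hkmax_def
  have hkmin_pos : 0 < kmin := (Finset.lt_inf'_iff hne).mpr fun i _ => hk i
  have hkmin_le : ∀ i, kmin ≤ kg i := fun i => Finset.inf'_le _ (Finset.mem_univ i)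
  have hkmax_ge : ∀ i, kg i ≤ kmax := fun i => Finset.le_sup' _ (Finset.mem_univ i)
  have hkmax_pos : 0 < kmax := lt_of_lt_of_le hkmin_pos ((hkmin_le ⟨0, by omega⟩).trans (hkmax_ge ⟨0, by omega⟩))
  refine ⟨kmin ^ 2, pow_pos hkmin_pos 2, ?_, Real.sqrt (kmax / kmin), ?_, kmin,
    hkmin_pos, ?_⟩
  · -- Rayleigh bound
    intro ξ v
    have := quad_form_eq kg (fun i => deriv (f i) (ξ (Fin.last n))) v
    simp only [inner_gradphi]
    rw [this]
    have h1 : kmin ^ 2 * ∑ i, v i ^ 2 ≤ ∑ i, (kg i * v i) ^ 2 := by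
      rw [Finset.mul_sum]
      refine Finset.sum_le_sum fun i _ => ?_
      rw [mul_pow]
      exact mul_le_mul_of_nonneg_right
        (pow_le_pow_left₀ hkmin_pos.le (hkmin_le i) 2) (sq_nonneg _)
    nlinarith [sq_nonneg (∑ i, kg i * (fun i => deriv (f i) (ξ (Fin.last n))) i * v i)]
  · -- c ≥ 1
    rw [show (1:ℝ) = Real.sqrt 1 by simp]
    exact Real.sqrt_le_sqrt ((one_le_div hkmin_pos).mpr (hkmin_le _ |>.trans (hkmax_ge ⟨0, by omega⟩)))
  · -- exponential decay
    intro ξ hξ t ht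
    set w : ℝ → ℝ := fun t => ξ t (Fin.last n) with hw_def
    set φ : Fin n → ℝ → ℝ := fun i t => ξ t (Fin.castSucc i) - f i (w t) with hφ_def
    set S : ℝ → ℝ := fun t => ∑ j, kg j * φ j t * deriv (f j) (w t) with hS_def
    -- derivative of each coordinate of the trajectory
    have hcoord : ∀ (c : Fin (n+1)) (s : ℝ), 0 ≤ s →
        HasDerivWithinAt (fun t => ξ t c) (chih f kg (ξ s) c) (Set.Ici (0:ℝ)) s := by
      intro c s hs
      exact (EuclideanSpace.proj c).hasFDerivAt.comp_hasDerivWithinAt s (hξ s hs)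
    have hfd : ∀ i (x : ℝ), HasDerivAt (f i) (deriv (f i) x) x := fun i x =>
      (((hf i).differentiable (by norm_num)) x).hasDerivAt
    -- derivative of φ i
    have hφ' : ∀ i (s : ℝ), 0 ≤ s →
        HasDerivWithinAt (φ i) (-(kg i * φ i s) - deriv (f i) (w s) * S s)
          (Set.Ici (0:ℝ)) s := by
      intro i s hs
      have hw' : HasDerivWithinAt w (chih f kg (ξ s) (Fin.last n)) (Set.Ici (0:ℝ)) s :=
        hcoord (Fin.last n) s hs
      have hcomp : HasDerivWithinAt (fun t => f i (w t))
          (deriv (f i) (w s) * chih f kg (ξ s) (Fin.last n)) (Set.Ici (0:ℝ)) s :=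
        (hfd i (w s)).comp_hasDerivWithinAt s hw'
      have := (hcoord (Fin.castSucc i) s hs).sub hcomp
      refine this.congr_deriv ?_
      simp only [chih, WithLp.ofLp_toLp, Fin.snoc_castSucc, Fin.snoc_last, hS_def, hφ_def, hw_def]
      ring
    -- Lyapunov function
    set g : ℝ → ℝ := fun t => ∑ i, kg i * φ i t ^ 2 with hg_def
    have hg' : ∀ (s : ℝ), 0 ≤ s →
        HasDerivWithinAt g
          (∑ i, kg i * (2 * φ i s * (-(kg i * φ i s) - deriv (f i) (w s) * S s)))
          (Set.Ici (0:ℝ)) s := by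
      intro s hs
      exact HasDerivWithinAt.fun_sum fun i _ =>
        (((hφ' i s hs).pow 2).const_mul (kg i)).congr_deriv (by ring)
    -- the derivative bound : g' ≤ -2 kmin g
    have hbound : ∀ (s : ℝ), 0 ≤ s →
        (∑ i, kg i * (2 * φ i s * (-(kg i * φ i s) - deriv (f i) (w s) * S s))) ≤
          -2 * kmin * g s := by
      intro s hs
      have hSs : S s = ∑ j, kg j * φ j s * deriv (f j) (w s) := rfl
      have expand : (∑ i, kg i * (2 * φ i s * (-(kg i * φ i s) - deriv (f i) (w s) * S s)))
          = -2 * (∑ i, (kg i * φ i s)^2) - 2 * S s ^ 2 := by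
        have h1 : ∀ i : Fin n,
            kg i * (2 * φ i s * (-(kg i * φ i s) - deriv (f i) (w s) * S s)) =
            -2 * (kg i * φ i s)^2 - (2 * S s) * (kg i * φ i s * deriv (f i) (w s)) :=
          fun i => by ring
        rw [Finset.sum_congr rfl fun i _ => h1 i, Finset.sum_sub_distrib,
          ← Finset.mul_sum, ← Finset.mul_sum, ← hSs]
        ring
      rw [expand]
      have h1 : kmin * g s ≤ ∑ i, (kg i * φ i s)^2 := by
        rw [hg_def, Finset.mul_sum]
        refine Finset.sum_le_sum fun i _ => ?_
        have : kmin * (kg i * φ i s ^2) ≤ kg i * (kg i * φ i s ^ 2) :=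
          mul_le_mul_of_nonneg_right (hkmin_le i)
            (mul_nonneg (hk i).le (sq_nonneg _))
        nlinarith
      nlinarith [sq_nonneg (S s)]
    -- h := g * exp(2 kmin t) is antitone on Ici 0
    set h : ℝ → ℝ := fun t => g t * Real.exp (2 * kmin * t) with hh_def
    have hh' : ∀ (s : ℝ), 0 ≤ s →
        HasDerivWithinAt h
          (((∑ i, kg i * (2 * φ i s * (-(kg i * φ i s) - deriv (f i) (w s) * S s))) +
            2 * kmin * g s) * Real.exp (2 * kmin * s))
          (Set.Ici (0:ℝ)) s := by
      intro s hs
      have he : HasDerivAt (fun t : ℝ => Real.exp (2 * kmin * t))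
          (Real.exp (2 * kmin * s) * (2 * kmin * 1)) s :=
        ((hasDerivAt_id s).const_mul (2 * kmin)).exp
      exact ((hg' s hs).mul he.hasDerivWithinAt).congr_deriv (by ring)
    have hanti : AntitoneOn h (Set.Ici (0:ℝ)) := by
      refine antitoneOn_of_deriv_nonpos (convex_Ici 0)
        (fun s hs => ((hh' s hs).continuousWithinAt)) ?_ ?_
      · intro s hs
        rw [interior_Ici] at hs
        exact (((hh' s hs.le).hasDerivAt (Ici_mem_nhds hs)).differentiableAt).differentiableWithinAt
      · intro s hs
        rw [interior_Ici] at hs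
        rw [((hh' s hs.le).hasDerivAt (Ici_mem_nhds hs)).deriv]
        have hb := hbound s hs.le
        have hgnn : 0 ≤ g s := Finset.sum_nonneg fun i _ =>
          mul_nonneg (hk i).le (sq_nonneg _)
        nlinarith [Real.exp_pos (2 * kmin * s)]
    have hht : h t ≤ h 0 := hanti (Set.self_mem_Ici) ht ht
    -- finish
    have hgnn : ∀ s, 0 ≤ g s := fun s => Finset.sum_nonneg fun i _ =>
      mul_nonneg (hk i).le (sq_nonneg _)
    have hgt : g t ≤ g 0 * Real.exp (-(2 * kmin * t)) := by
      rw [Real.exp_neg, ← div_eq_mul_inv, le_div_iff₀ (Real.exp_pos _)]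
      simpa [hh_def] using hht
    have hEt : ∑ i, φ i t ^ 2 ≤ (kmax / kmin) * (∑ i, φ i 0 ^ 2) *
        Real.exp (-(2 * kmin * t)) := by
      have h1 : kmin * ∑ i, φ i t ^ 2 ≤ g t := by
        rw [hg_def, Finset.mul_sum]
        exact Finset.sum_le_sum fun i _ =>
          mul_le_mul_of_nonneg_right (hkmin_le i) (sq_nonneg _)
      have h2 : g 0 ≤ kmax * ∑ i, φ i 0 ^ 2 := by
        rw [hg_def, Finset.mul_sum]
        exact Finset.sum_le_sum fun i _ =>
          mul_le_mul_of_nonneg_right (hkmax_ge i) (sq_nonneg _)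
      have h3 := hgt
      have he := Real.exp_pos (-(2 * kmin * t))
      rw [div_mul_eq_mul_div, div_mul_eq_mul_div, le_div_iff₀ hkmin_pos]
      calc (∑ i, φ i t ^ 2) * kmin = kmin * ∑ i, φ i t ^ 2 := by ring
        _ ≤ g t := h1
        _ ≤ g 0 * Real.exp (-(2 * kmin * t)) := h3
        _ ≤ kmax * (∑ i, φ i 0 ^ 2) * Real.exp (-(2 * kmin * t)) :=
            mul_le_mul_of_nonneg_right h2 he.le
    -- rewrite target in terms of φ
    have hRHS : (Real.sqrt (kmax / kmin) * Real.sqrt (∑ i, φ i 0 ^ 2) *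
        Real.exp (-kmin * t)) ^ 2 = (kmax / kmin) * (∑ i, φ i 0 ^ 2) *
        Real.exp (-(2 * kmin * t)) := by
      rw [mul_pow, mul_pow, Real.sq_sqrt (by positivity), Real.sq_sqrt
        (Finset.sum_nonneg fun i _ => sq_nonneg _), sq (Real.exp (-kmin * t)),
        ← Real.exp_add, show -kmin * t + -kmin * t = -(2 * kmin * t) by ring]
    have := Real.sqrt_le_sqrt (hRHS ▸ hEt)
    rw [Real.sqrt_sq (by positivity)] at this
    exact this
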